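/- For every action j ∈ Fin K and every horizon T, (γ/K)·∑_{t=0}^{T−1} x_t(j) − log K ≤ ((γ/K)/(1−γ))·∑_{t=0}^{T−1} ∑_{i} p_t(i)·x_t(i) + ((e−2)·(γ/K)²/(1−γ))·∑_{t=0}^{T−1} ∑_{i} p_t(i)·(x_t(i))², where e = exp(1). -/

import Mathlib

/-!
Writing `Wₜ = ∑ᵢ wₜ(i)`, the bound `eᶻ ≤ 1 + z + (e - 2) z²`
on `[0, 1]` together with `log (1 + u) ≤ u` bounds each increment `log Wₜ₊₁ - log Wₜ` by the
`wₜ / Wₜ`-average of `z + (e - 2) z²` at `z = (γ/K) xₜ(i)`, and `(1 - γ) wₜ / Wₜ ≤ pₜ` turns this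
into the `pₜ`-averages of the statement. Telescoping, `log W₀ = log K` and
`log W_T ≥ log w_T(j) = (γ/K) ∑ₜ xₜ(j)` conclude.
-/

open Finset Real

theorem Real.hasSum_pow_add_two_div_factorial (y : ℝ) :
    HasSum (fun n : ℕ => y ^ (n + 2) / (n + 2).factorial) (exp y - 1 - y) := by
  have h := (hasSum_nat_add_iff' 2).mpr (NormedSpace.expSeries_div_hasSum_exp y)
  rw [← Real.exp_eq_exp_ℝ] at h
  simpa [sum_range_succ, sub_sub] using h

theorem Real.exp_le_one_add_add_exp_one_sub_two_mul_sq {z : ℝ} (hz0 : 0 ≤ z) (hz1 : z ≤ 1) :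
    exp z ≤ 1 + z + (exp 1 - 2) * z ^ 2 := by
  have htail : exp z - 1 - z ≤ z ^ 2 * (exp 1 - 1 - 1) := by
    refine hasSum_le (fun n => ?_) (hasSum_pow_add_two_div_factorial z)
      ((hasSum_pow_add_two_div_factorial 1).mul_left (z ^ 2))
    have hzn : z ^ (n + 2) ≤ z ^ 2 := pow_le_pow_of_le_one hz0 hz1 (by omega)
    rw [one_pow, mul_one_div]
    gcongr
  linarith

theorem Real.log_sum_mul_exp_le {ι : Type*} [Fintype ι] {w y : ι → ℝ} (hw : ∀ i, 0 ≤ w i)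
    (hW : 0 < ∑ i, w i) (hy0 : ∀ i, 0 ≤ y i) (hy1 : ∀ i, y i ≤ 1) :
    log (∑ i, w i * exp (y i)) ≤
      log (∑ i, w i) + ∑ i, w i / (∑ j, w j) * (y i + (exp 1 - 2) * y i ^ 2) := by
  set W := ∑ j, w j
  set u := ∑ i, w i / W * (y i + (exp 1 - 2) * y i ^ 2)
  have he2 : 0 ≤ exp 1 - 2 := sub_nonneg.mpr exp_one_gt_two.le
  have hu : 0 ≤ u := sum_nonneg fun i _ => by have := hw i; have := hy0 i; positivity
  have hbound : ∑ i, w i * exp (y i) ≤ W * (1 + u) :=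
    calc ∑ i, w i * exp (y i) ≤ ∑ i, w i * (1 + (y i + (exp 1 - 2) * y i ^ 2)) := by
          gcongr with i
          · exact hw i
          · linarith [exp_le_one_add_add_exp_one_sub_two_mul_sq (hy0 i) (hy1 i)]
      _ = W + ∑ i, w i * (y i + (exp 1 - 2) * y i ^ 2) := by
          simp only [mul_add, mul_one, sum_add_distrib, W]
      _ = W * (1 + u) := by
          rw [mul_add, mul_one, mul_sum]
          congr 1
          exact sum_congr rfl fun i _ => by field_simp
  have hpos : 0 < ∑ i, w i * exp (y i) :=
    hW.trans_le <| sum_le_sum fun i _ => le_mul_of_one_le_right (hw i) (one_le_exp (hy0 i))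
  calc log (∑ i, w i * exp (y i)) ≤ log (W * (1 + u)) := log_le_log hpos hbound
    _ = log W + log (1 + u) := log_mul hW.ne' (by positivity)
    _ ≤ log W + u := by linarith [log_le_sub_one_of_pos (by positivity : 0 < 1 + u)]

theorem Real.log_sum_mul_exp_mul_sub_log_sum_le {ι : Type*} [Fintype ι] {γ c : ℝ}
    (hγ1 : γ < 1) (hc : 0 ≤ c) {w x p : ι → ℝ} (hw : ∀ i, 0 ≤ w i) (hW : 0 < ∑ i, w i)
    (hx0 : ∀ i, 0 ≤ x i) (hx1 : ∀ i, c * x i ≤ 1) (hp : ∀ i, (1 - γ) * (w i / ∑ j, w j) ≤ p i) :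
    log (∑ i, w i * exp (c * x i)) - log (∑ i, w i) ≤
      c / (1 - γ) * ∑ i, p i * x i + (exp 1 - 2) * c ^ 2 / (1 - γ) * ∑ i, p i * x i ^ 2 := by
  have h1γ : 0 < 1 - γ := by linarith
  have he2 : 0 ≤ exp 1 - 2 := sub_nonneg.mpr exp_one_gt_two.le
  have hq : ∀ i, w i / ∑ j, w j ≤ p i / (1 - γ) := fun i => by
    rw [le_div_iff₀ h1γ, mul_comm]
    exact hp i
  calc log (∑ i, w i * exp (c * x i)) - log (∑ i, w i)
      ≤ ∑ i, w i / (∑ j, w j) * (c * x i + (exp 1 - 2) * (c * x i) ^ 2) := by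
        linarith [log_sum_mul_exp_le hw hW (fun i => mul_nonneg hc (hx0 i)) hx1]
    _ ≤ ∑ i, p i / (1 - γ) * (c * x i + (exp 1 - 2) * (c * x i) ^ 2) := by
        refine sum_le_sum fun i _ => mul_le_mul_of_nonneg_right (hq i) ?_
        have := hx0 i
        positivity
    _ = c / (1 - γ) * ∑ i, p i * x i + (exp 1 - 2) * c ^ 2 / (1 - γ) * ∑ i, p i * x i ^ 2 := by
        rw [mul_sum, mul_sum, ← sum_add_distrib]
        refine sum_congr rfl fun i _ => ?_
        field_simp

theorem eq_exp_sum_range_of_eq_mul_exp {u a : ℕ → ℝ} (h0 : u 0 = 1)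
    (hsucc : ∀ t, u (t + 1) = u t * exp (a t)) (t : ℕ) :
    u t = exp (∑ s ∈ range t, a s) := by
  induction t with
  | zero => simp [h0]
  | succ t ih => rw [hsucc, ih, sum_range_succ, exp_add]

open Finset in
theorem exp3_bwk_potential_bound_general
    (K : ℕ) (γ : ℝ) (hγ0 : 0 < γ) (hγ1 : γ < 1)
    (x : ℕ → Fin K → ℝ)
    (hx0 : ∀ t i, 0 ≤ x t i)
    (hx1 : ∀ t i, (γ / K) * x t i ≤ 1)
    (w : ℕ → Fin K → ℝ)
    (hw0 : ∀ i, w 0 i = 1)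
    (hwrec : ∀ t i, w (t + 1) i = w t i * Real.exp ((γ / K) * x t i))
    (p : ℕ → Fin K → ℝ)
    (hp : ∀ t i, p t i = (1 - γ) * w t i / (∑ j, w t j) + γ / K)
    (j : Fin K) (T : ℕ) :
    (γ / K) * (∑ t ∈ range T, x t j) - Real.log K ≤
      ((γ / K) / (1 - γ)) * ∑ t ∈ range T, ∑ i, p t i * x t i
        + ((Real.exp 1 - 2) * (γ / K) ^ 2 / (1 - γ)) *
            ∑ t ∈ range T, ∑ i, p t i * (x t i) ^ 2 := by
  have hw : ∀ t i, w t i = exp (∑ s ∈ range t, γ / K * x s i) := fun t i =>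
    eq_exp_sum_range_of_eq_mul_exp (u := fun t => w t i) (hw0 i) (fun t => hwrec t i) t
  have hwpos : ∀ t i, 0 < w t i := fun t i => hw t i ▸ exp_pos _
  have hWpos : ∀ t, 0 < ∑ i, w t i := fun t => sum_pos (fun i _ => hwpos t i) ⟨j, mem_univ j⟩
  have hround : ∀ t, log (∑ i, w (t + 1) i) - log (∑ i, w t i) ≤
      γ / K / (1 - γ) * ∑ i, p t i * x t i
        + (exp 1 - 2) * (γ / K) ^ 2 / (1 - γ) * ∑ i, p t i * x t i ^ 2 := fun t => by
    simp only [hwrec]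
    refine log_sum_mul_exp_mul_sub_log_sum_le hγ1 (by positivity) (fun i => (hwpos t i).le)
      (hWpos t) (hx0 t) (hx1 t) fun i => ?_
    rw [hp, mul_div_assoc]
    exact le_add_of_nonneg_right (by positivity)
  calc γ / K * ∑ t ∈ range T, x t j - log K = log (w T j) - log (∑ i, w 0 i) := by
        simp [hw, mul_sum]
    _ ≤ log (∑ i, w T i) - log (∑ i, w 0 i) := by
        gcongr
        · exact hwpos T j
        · exact single_le_sum (fun i _ => (hwpos T i).le) (mem_univ j)
    _ = ∑ t ∈ range T, (log (∑ i, w (t + 1) i) - log (∑ i, w t i)) :=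
        (sum_range_sub (fun t => log (∑ i, w t i)) T).symm
    _ ≤ _ := (sum_le_sum fun t _ => hround t).trans_eq <| by
        rw [sum_add_distrib, mul_sum, mul_sum]

open Finset in
theorem exp3_bwk_potential_bound
    (K : ℕ) (hK : 1 ≤ K) (γ : ℝ) (hγ0 : 0 < γ) (hγ1 : γ < 1)
    (x : ℕ → Fin K → ℝ)
    (hx0 : ∀ t i, 0 ≤ x t i)
    (hx1 : ∀ t i, (γ / K) * x t i ≤ 1)
    (w : ℕ → Fin K → ℝ)
    (hw0 : ∀ i, w 0 i = 1)
    (hwrec : ∀ t i, w (t + 1) i = w t i * Real.exp ((γ / K) * x t i))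
    (p : ℕ → Fin K → ℝ)
    (hp : ∀ t i, p t i = (1 - γ) * w t i / (∑ j, w t j) + γ / K)
    (j : Fin K) (T : ℕ) :
    (γ / K) * (∑ t ∈ range T, x t j) - Real.log K ≤
      ((γ / K) / (1 - γ)) * ∑ t ∈ range T, ∑ i, p t i * x t i
        + ((Real.exp 1 - 2) * (γ / K) ^ 2 / (1 - γ)) *
            ∑ t ∈ range T, ∑ i, p t i * (x t i) ^ 2 :=
  exp3_bwk_potential_bound_general K γ hγ0 hγ1 x hx0 hx1 w hw0 hwrec p hp j T
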